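/- Assuming that (4/5)·b(n) ≤ a(n) for all n, the ratio a(n)/b(n) tends to 4/5 as n → ∞, where a(n) and b(n) are the sums of products of decimal digits of the first n even and first n odd numbers respectively. -/

import Mathlib

def digProd (p : ℕ) : ℕ := (Nat.digits 10 p).prod

def a (n : ℕ) : ℕ := ∑ j ∈ Finset.Icc 1 n, digProd (2 * j)

def b (n : ℕ) : ℕ := ∑ j ∈ Finset.Icc 1 n, digProd (2 * j - 1)

def Sd (m : ℕ) : ℕ := ∑ d ∈ Finset.range m, digProd d

lemma digProd_zero : digProd 0 = 1 := by simp [digProd]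

lemma Sd_succ (m : ℕ) : Sd (m + 1) = Sd m + digProd m := Finset.sum_range_succ _ m

lemma digProd_rec (p : ℕ) (hp : 0 < p) : digProd p = p % 10 * digProd (p / 10) := by
  unfold digProd
  rw [Nat.digits_def' (by norm_num) hp, List.prod_cons]

lemma digProd_10 (m r : ℕ) (hr : r < 10) (h : 0 < 10 * m + r) :
    digProd (10 * m + r) = r * digProd m := by
  have h1 : (10 * m + r) % 10 = r := by omega
  have h2 : (10 * m + r) / 10 = m := by omega
  rw [digProd_rec _ h, h1, h2]

lemma a_succ (n : ℕ) : a (n + 1) = a n + digProd (2 * (n + 1)) := by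
  unfold a
  rw [Finset.sum_Icc_succ_top (by omega)]

lemma b_succ (n : ℕ) : b (n + 1) = b n + digProd (2 * (n + 1) - 1) := by
  unfold b
  rw [Finset.sum_Icc_succ_top (by omega)]

lemma a5 (m : ℕ) : a (5 * m) = 20 * Sd m := by
  induction m with
  | zero => rfl
  | succ m ih =>
    have e : 5 * (m + 1) = (((((5 * m) + 1) + 1) + 1) + 1) + 1 := by ring
    rw [e, a_succ, a_succ, a_succ, a_succ, a_succ, ih]
    have t1 : 2 * (5 * m + 1) = 10 * m + 2 := by ring
    have t2 : 2 * (5 * m + 1 + 1) = 10 * m + 4 := by ring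
    have t3 : 2 * (5 * m + 1 + 1 + 1) = 10 * m + 6 := by ring
    have t4 : 2 * (5 * m + 1 + 1 + 1 + 1) = 10 * m + 8 := by ring
    have t5 : 2 * (5 * m + 1 + 1 + 1 + 1 + 1) = 10 * (m + 1) + 0 := by ring
    rw [t1, t2, t3, t4, t5, digProd_10 m 2 (by omega) (by omega),
      digProd_10 m 4 (by omega) (by omega), digProd_10 m 6 (by omega) (by omega),
      digProd_10 m 8 (by omega) (by omega), digProd_10 (m+1) 0 (by omega) (by omega)]
    rw [Sd_succ]
    ring

lemma b5 (m : ℕ) : b (5 * m) = 25 * Sd m := by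
  induction m with
  | zero => rfl
  | succ m ih =>
    have e : 5 * (m + 1) = (((((5 * m) + 1) + 1) + 1) + 1) + 1 := by ring
    rw [e, b_succ, b_succ, b_succ, b_succ, b_succ, ih]
    have t1 : 2 * (5 * m + 1) - 1 = 10 * m + 1 := by omega
    have t2 : 2 * (5 * m + 1 + 1) - 1 = 10 * m + 3 := by omega
    have t3 : 2 * (5 * m + 1 + 1 + 1) - 1 = 10 * m + 5 := by omega
    have t4 : 2 * (5 * m + 1 + 1 + 1 + 1) - 1 = 10 * m + 7 := by omega
    have t5 : 2 * (5 * m + 1 + 1 + 1 + 1 + 1) - 1 = 10 * m + 9 := by omega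
    rw [t1, t2, t3, t4, t5, digProd_10 m 1 (by omega) (by omega),
      digProd_10 m 3 (by omega) (by omega), digProd_10 m 5 (by omega) (by omega),
      digProd_10 m 7 (by omega) (by omega), digProd_10 m 9 (by omega) (by omega)]
    rw [Sd_succ]
    ring

lemma a_mono : Monotone a := by
  intro x y hxy
  exact Finset.sum_le_sum_of_subset (Finset.Icc_subset_Icc_right hxy)

lemma b_mono : Monotone b := by
  intro x y hxy
  exact Finset.sum_le_sum_of_subset (Finset.Icc_subset_Icc_right hxy)

lemma Sd_mono : Monotone Sd := by
  intro x y hxy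
  exact Finset.sum_le_sum_of_subset (Finset.range_subset_range.mpr hxy)

lemma digProd_lt10 (d : ℕ) (h1 : 0 < d) (h2 : d < 10) : digProd d = d := by
  rw [digProd_rec d h1, show d % 10 = d by omega, show d / 10 = 0 by omega, digProd_zero,
    mul_one]

lemma Sd_ten : ∀ M, 1 ≤ M → Sd (10 * M) = 1 + 45 * Sd M := by
  intro M
  induction M with
  | zero => omega
  | succ M ih =>
    intro _
    rcases Nat.eq_zero_or_pos M with hM | hM
    · subst hM
      have h10 : Sd 10 = 46 := by
        have e : ∀ d, 0 < d → d < 10 → digProd d = d := digProd_lt10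
        simp [Sd, Finset.sum_range_succ, digProd_zero, e 1, e 2, e 3, e 4, e 5, e 6, e 7,
          e 8, e 9]
      have h1 : Sd 1 = 1 := by simp [Sd, digProd_zero]
      norm_num [h10, h1]
    · have e : 10 * (M + 1) = 10 * M + 10 := by ring
      rw [e, Sd, Finset.sum_range_add, ← Sd]
      have hsum : ∑ r ∈ Finset.range 10, digProd (10 * M + r) = 45 * digProd M := by
        rw [Finset.sum_range_succ, Finset.sum_range_succ, Finset.sum_range_succ,
          Finset.sum_range_succ, Finset.sum_range_succ, Finset.sum_range_succ,
          Finset.sum_range_succ, Finset.sum_range_succ, Finset.sum_range_succ,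
          Finset.sum_range_succ, Finset.sum_range_zero]
        rw [digProd_10 M 0 (by omega) (by omega), digProd_10 M 1 (by omega) (by omega),
          digProd_10 M 2 (by omega) (by omega), digProd_10 M 3 (by omega) (by omega),
          digProd_10 M 4 (by omega) (by omega), digProd_10 M 5 (by omega) (by omega),
          digProd_10 M 6 (by omega) (by omega), digProd_10 M 7 (by omega) (by omega),
          digProd_10 M 8 (by omega) (by omega), digProd_10 M 9 (by omega) (by omega)]
        ring
      rw [hsum, ih hM, Sd_succ]
      ring

lemma Sd_pow (k : ℕ) : 45 ^ k ≤ Sd (10 ^ k) := by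
  induction k with
  | zero => simp [Sd, digProd_zero]
  | succ k ih =>
    have h1 : Sd (10 ^ (k + 1)) = 1 + 45 * Sd (10 ^ k) := by
      rw [pow_succ, mul_comm]
      exact Sd_ten _ (Nat.one_le_pow _ _ (by norm_num))
    rw [h1, pow_succ]
    nlinarith

lemma digProd_le (k : ℕ) : ∀ p, p < 10 ^ k → digProd p ≤ 9 ^ k := by
  induction k with
  | zero =>
    intro p hp
    have h0 : p = 0 := by omega
    subst h0; simp [digProd_zero]
  | succ k ih =>
    intro p hp
    rcases Nat.eq_zero_or_pos p with h0 | h0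
    · subst h0; rw [digProd_zero]; exact Nat.one_le_pow _ _ (by norm_num)
    · rw [digProd_rec p h0, pow_succ]
      have hd : p / 10 < 10 ^ k := by
        have : 10 ^ (k + 1) = 10 ^ k * 10 := pow_succ 10 k
        omega
      have := ih (p / 10) hd
      have h9 : p % 10 ≤ 9 := by omega
      calc p % 10 * digProd (p / 10) ≤ 9 * 9 ^ k := Nat.mul_le_mul h9 this
        _ = 9 ^ k * 9 := by ring

lemma key (k m : ℕ) (hm : 10 ^ k ≤ m) : 5 ^ k * digProd m ≤ 9 * Sd m := by
  set K := Nat.log 10 m with hK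
  have hm0 : m ≠ 0 := by
    have : (0:ℕ) < 10 ^ k := Nat.pow_pos (by norm_num)
    omega
  have h1 : 10 ^ K ≤ m := Nat.pow_log_le_self 10 hm0
  have h2 : m < 10 ^ (K + 1) := Nat.lt_pow_succ_log_self (by norm_num) m
  have hkK : k ≤ K := by
    have : 10 ^ k < 10 ^ (K + 1) := lt_of_le_of_lt hm h2
    have := (Nat.pow_lt_pow_iff_right (by norm_num : 1 < 10)).mp this
    omega
  have hd : digProd m ≤ 9 ^ (K + 1) := digProd_le (K + 1) m h2
  have hs : 45 ^ K ≤ Sd m := le_trans (Sd_pow K) (Sd_mono h1)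
  calc 5 ^ k * digProd m ≤ 5 ^ K * 9 ^ (K + 1) :=
        Nat.mul_le_mul (Nat.pow_le_pow_right (by norm_num) hkK) hd
    _ = 9 * 45 ^ K := by rw [pow_succ]; rw [show (45:ℕ) = 5 * 9 by norm_num, mul_pow]; ring
    _ ≤ 9 * Sd m := Nat.mul_le_mul_left _ hs

/-- Assuming `4·b(n) ≤ 5·a(n)` for all `n ≥ 1`, the ratio `a(n)/b(n)` tends to `4/5`. -/
theorem stmt17 (h : ∀ n : ℕ, 1 ≤ n → 4 * b n ≤ 5 * a n) :
    Filter.Tendsto (fun n : ℕ => (a n : ℝ) / (b n : ℝ)) Filter.atTop (nhds (4 / 5)) := by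
  rw [Metric.tendsto_atTop]
  intro ε hε
  obtain ⟨k, hk⟩ := exists_pow_lt_of_lt_one (show (0:ℝ) < ε / 36 by positivity)
    (show (1:ℝ)/5 < 1 by norm_num)
  refine ⟨5 * 10 ^ k, fun n hn => ?_⟩
  set m := n / 5 with hmdef
  have h10 : 0 < 10 ^ k := Nat.pow_pos (by norm_num)
  have hm10 : 10 ^ k ≤ m := by omega
  have hm1 : 1 ≤ m := le_trans h10 hm10
  have hS1 : 1 ≤ Sd m := by
    calc 1 = Sd 1 := by simp [Sd, digProd_zero]
      _ ≤ Sd m := Sd_mono hm1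
  -- ℕ inequalities
  have hb1 : 25 * Sd m ≤ b n := by
    rw [← b5 m]; exact b_mono (by omega)
  have ha1 : a n ≤ 20 * Sd m + 20 * digProd m := by
    have : a n ≤ a (5 * (m + 1)) := a_mono (by omega)
    rw [a5] at this
    rw [Sd_succ] at this
    omega
  have hP : 5 ^ k * digProd m ≤ 9 * Sd m := key k m hm10
  have hlow : 4 * b n ≤ 5 * a n := h n (by omega)
  have hbpos : 0 < b n := by omega
  -- pass to ℝ
  have hBpos : (0:ℝ) < b n := by exact_mod_cast hbpos
  have hSpos : (0:ℝ) < Sd m := by exact_mod_cast hS1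
  have hB : (25:ℝ) * Sd m ≤ b n := by exact_mod_cast hb1
  have hA : (a n : ℝ) ≤ 20 * Sd m + 20 * digProd m := by exact_mod_cast ha1
  have hPr : (5:ℝ) ^ k * digProd m ≤ 9 * Sd m := by exact_mod_cast hP
  have hlowr : (4:ℝ) * b n ≤ 5 * a n := by exact_mod_cast hlow
  have h5pos : (0:ℝ) < 5 ^ k := by positivity
  have hPle : (digProd m : ℝ) ≤ 9 * Sd m / 5 ^ k := by
    rw [le_div_iff₀ h5pos]; linarith [hPr]
  have hpow : ((1:ℝ)/5) ^ k = 1 / 5 ^ k := by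
    rw [div_pow]; norm_num
  rw [hpow] at hk
  have hkey : (9:ℝ) * Sd m / 5 ^ k < ε / 4 * Sd m := by
    rw [div_lt_iff₀ h5pos] at hk ⊢
    calc (9:ℝ) * Sd m = 36 * Sd m * (1/4) := by ring
      _ < ε / 4 * Sd m * 5 ^ k := by nlinarith
  have hdiff : (a n : ℝ) / b n - 4 / 5 < ε := by
    rw [div_sub_div _ _ (ne_of_gt hBpos) (by norm_num : (5:ℝ) ≠ 0), div_lt_iff₀ (by positivity)]
    have : (a n : ℝ) * 5 - 4 * b n ≤ 100 * digProd m := by linarith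
    nlinarith [hPle, hkey, hSpos, hBpos, hε]
  have hdiff2 : (0:ℝ) ≤ (a n : ℝ) / b n - 4 / 5 := by
    rw [sub_nonneg, div_le_div_iff₀ (by norm_num) hBpos]
    linarith
  rw [Real.dist_eq, abs_of_nonneg hdiff2]
  linarith
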